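/- arXiv:2202.00789 — 2 statements merged into one kernel-verified Lean document; each statement's English description precedes it below -/
import Mathlib

section
/- Let X ⊆ ℝ^m be a convex set, let Y ⊆ ℝ^n be a nonempty convex set, and let h : ℝ^m → ℝ be a linear map with h(x) ≥ 0 for every x ∈ X. Then the scaled extension X ◁_h Y = {(x, y) ∈ ℝ^m × ℝ^n : x ∈ X, y ∈ h(x) • Y} is a convex subset of ℝ^m × ℝ^n. -/
open Pointwise

/-- The scaled extension of a convex set `X` with a nonempty convex set `Y` via a
linear map `h` that is nonnegative on `X` is convex. -/
theorem scaledExtension_convex (m n : ℕ) (X : Set (Fin m → ℝ)) (Y : Set (Fin n → ℝ))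
    (h : (Fin m → ℝ) →ₗ[ℝ] ℝ)
    (hX : Convex ℝ X) (hY : Convex ℝ Y) (hYne : Y.Nonempty)
    (hpos : ∀ x ∈ X, 0 ≤ h x) :
    Convex ℝ {p : (Fin m → ℝ) × (Fin n → ℝ) | p.1 ∈ X ∧ p.2 ∈ h p.1 • Y} := by
  rintro ⟨x₁, y₁⟩ ⟨hx₁, v₁, hv₁, hy1⟩ ⟨x₂, y₂⟩ ⟨hx₂, v₂, hv₂, hy2⟩ a b ha hb hab
  simp only at hy1 hy2 hx₁ hx₂
  subst hy1; subst hy2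
  refine ⟨hX hx₁ hx₂ ha hb hab, ?_⟩
  have hx : a • x₁ + b • x₂ ∈ X := hX hx₁ hx₂ ha hb hab
  simp only [Prod.smul_mk, Prod.mk_add_mk]
  have hs : h (a • x₁ + b • x₂) = a * h x₁ + b * h x₂ := by
    simp [map_add, map_smul, smul_eq_mul]
  have h1 : 0 ≤ a * h x₁ := mul_nonneg ha (hpos _ hx₁)
  have h2 : 0 ≤ b * h x₂ := mul_nonneg hb (hpos _ hx₂)
  set s := a * h x₁ + b * h x₂ with hsdef
  rcases eq_or_lt_of_le (add_nonneg h1 h2) with h0 | h0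
  · -- s = 0, so both terms are 0
    have ha1 : a * h x₁ = 0 := le_antisymm (by linarith) h1
    have hb1 : b * h x₂ = 0 := le_antisymm (by linarith) h2
    obtain ⟨y₀, hy₀⟩ := hYne
    refine ⟨y₀, hy₀, ?_⟩
    simp only [hs]
    show s • y₀ = _
    rw [hsdef, ← h0, smul_smul, smul_smul, ha1, hb1]
    simp
  · refine ⟨(a * h x₁ / s) • v₁ + (b * h x₂ / s) • v₂,
      hY hv₁ hv₂ (div_nonneg h1 h0.le) (div_nonneg h2 h0.le) (by rw [← add_div]; exact div_self (ne_of_gt h0)), ?_⟩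
    have hs0 : s ≠ 0 := ne_of_gt h0
    have e1 : s * (a * h x₁ / s) = a * h x₁ := by field_simp
    have e2 : s * (b * h x₂ / s) = b * h x₂ := by field_simp
    simp only [hs]
    show s • _ = _
    rw [smul_add, smul_smul, smul_smul, e1, e2, ← smul_smul, ← smul_smul]
end

section
/- Let S ⊆ ℝ^m be a finite set, let X = conv(S) be its convex hull, let A be a nonempty finite set with standard simplex Δ^A ⊆ ℝ^A, and let h : ℝ^m → ℝ be a linear map with h(x) ≥ 0 for every x ∈ X. Then the scaled extension X ◁_h Δ^A = {(x, y) : x ∈ X, y ∈ h(x) • Δ^A} equals the convex hull of the finite set {(v, h(v) • e_a) : v ∈ S, a ∈ A}, where e_a ∈ ℝ^A denotes the standard basis vector supported on a. In particular, the scaled extension of a polytope with a simplex via a nonnegative linear map is a polytope. -/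
open Pointwise

lemma single_mem_stdSimplex' (A : Type*) [Fintype A] [DecidableEq A] (a : A) :
    (Pi.single a 1 : A → ℝ) ∈ stdSimplex ℝ A := by
  constructor
  · intro b
    rcases eq_or_ne b a with rfl | hb
    · simp
    · simp [Pi.single_apply, hb]
  · simp [Finset.sum_pi_single']

/-- The scaled extension of a polytope `X = conv S` with the standard simplex `Δ^A`
via a linear map `h` nonnegative on `X` is the convex hull of the finite set of
points `(v, h v • e_a)` for `v ∈ S` and `a ∈ A`; in particular it is a polytope. -/
theorem scaledExtension_convexHull (m : ℕ) (A : Type*) [Fintype A] [Nonempty A]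
    [DecidableEq A] (S : Set (Fin m → ℝ)) (hS : S.Finite)
    (h : (Fin m → ℝ) →ₗ[ℝ] ℝ)
    (hpos : ∀ x ∈ convexHull ℝ S, 0 ≤ h x) :
    {p : (Fin m → ℝ) × (A → ℝ) |
        p.1 ∈ convexHull ℝ S ∧ p.2 ∈ h p.1 • stdSimplex ℝ A}
      = convexHull ℝ {q : (Fin m → ℝ) × (A → ℝ) |
          ∃ v ∈ S, ∃ a : A, q = (v, h v • (Pi.single a 1 : A → ℝ))} := by
  apply Set.Subset.antisymm
  · rintro ⟨x, y⟩ ⟨hx, z, hz, hy⟩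
    dsimp only at hx hy
    subst hy
    rw [Set.Finite.convexHull_eq hS] at hx
    obtain ⟨w, hw0, hw1, hwx⟩ := hx
    rw [Finset.centerMass_eq_of_sum_1 _ _ hw1] at hwx
    simp only [id_eq] at hwx
    have hsum : ∑ p ∈ hS.toFinset ×ˢ Finset.univ, w p.1 * z p.2 = 1 := by
      rw [Finset.sum_product]
      simp_rw [← Finset.mul_sum, hz.2, mul_one, hw1]
    have key := Finset.centerMass_mem_convexHull
      (s := {q : (Fin m → ℝ) × (A → ℝ) |
          ∃ v ∈ S, ∃ a : A, q = (v, h v • (Pi.single a 1 : A → ℝ))})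
      (hS.toFinset ×ˢ Finset.univ)
      (w := fun p => w p.1 * z p.2)
      (z := fun p => ((p.1, h p.1 • (Pi.single p.2 1 : A → ℝ)) :
        (Fin m → ℝ) × (A → ℝ)))
      (fun p hp => mul_nonneg (hw0 p.1 (hS.mem_toFinset.mp
        (Finset.mem_product.mp hp).1)) (hz.1 p.2))
      (by rw [hsum]; norm_num)
      (fun p hp => ⟨p.1, hS.mem_toFinset.mp (Finset.mem_product.mp hp).1, p.2, rfl⟩)
    rw [Finset.centerMass_eq_of_sum_1 _ _ hsum] at key
    convert key using 1
    have hxeq : ∑ p ∈ hS.toFinset ×ˢ Finset.univ,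
        (w p.1 * z p.2) • ((p.1, h p.1 • (Pi.single p.2 1 : A → ℝ)) :
          (Fin m → ℝ) × (A → ℝ)) = (x, h x • z) := by
      apply Prod.ext
      · simp only [Prod.fst_sum, Prod.smul_mk]
        rw [Finset.sum_product]
        simp_rw [← Finset.sum_smul, ← Finset.mul_sum, hz.2, mul_one]
        exact hwx
      · simp only [Prod.snd_sum, Prod.smul_mk]
        funext b
        simp only [Finset.sum_apply, Pi.smul_apply, smul_eq_mul]
        rw [Finset.sum_product]
        have hhx : h x = ∑ v ∈ hS.toFinset, w v * h v := by
          rw [← hwx, map_sum]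
          simp [map_smul, smul_eq_mul]
        rw [hhx]
        rw [Finset.sum_mul]
        apply Finset.sum_congr rfl
        intro v _
        rw [Finset.sum_eq_single b]
        · simp [Pi.single_apply]; ring
        · intro a _ hab
          simp [Pi.single_apply, hab.symm]
        · simp
    rw [hxeq]
  · apply convexHull_min
    · rintro q ⟨v, hv, a, rfl⟩
      exact ⟨subset_convexHull ℝ S hv,
        ⟨Pi.single a 1, single_mem_stdSimplex' A a, rfl⟩⟩
    · rintro ⟨x1, y1⟩ ⟨hx1, z1, hz1, hy1⟩ ⟨x2, y2⟩ ⟨hx2, z2, hz2, hy2⟩ a b ha hb hab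
      dsimp only at hx1 hy1 hx2 hy2
      subst hy1; subst hy2
      refine ⟨(convex_convexHull ℝ S) hx1 hx2 ha hb hab, ?_⟩
      simp only [Prod.smul_mk, Prod.mk_add_mk, Prod.fst, Prod.snd]
      have hc : h (a • x1 + b • x2) = a * h x1 + b * h x2 := by
        simp [map_add, map_smul, smul_eq_mul]
      have h1 : (0:ℝ) ≤ a * h x1 := mul_nonneg ha (hpos x1 hx1)
      have h2 : (0:ℝ) ≤ b * h x2 := mul_nonneg hb (hpos x2 hx2)
      rcases (add_nonneg h1 h2).eq_or_lt with hc0 | hcpos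
      · have e1 : a * h x1 = 0 := by linarith
        have e2 : b * h x2 = 0 := by linarith
        refine ⟨z1, hz1, ?_⟩
        rw [hc]
        funext i
        simp only [Pi.add_apply, Pi.smul_apply, smul_eq_mul]
        rw [← hc0, ← mul_assoc, ← mul_assoc, e1, e2]
        ring
      · set c := a * h x1 + b * h x2 with hcdef
        refine ⟨(a * h x1 / c) • z1 + (b * h x2 / c) • z2, ?_, ?_⟩
        · exact (convex_stdSimplex ℝ A) hz1 hz2 (div_nonneg h1 hcpos.le)
            (div_nonneg h2 hcpos.le) (by field_simp; exact hcdef.symm)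
        · rw [hc]
          funext i
          simp only [Pi.add_apply, Pi.smul_apply, smul_eq_mul]
          rw [hcdef]
          have hne : a * h x1 + b * h x2 ≠ 0 := by rw [← hcdef]; exact hcpos.ne'
          field_simp
end
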